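/- The map Φ(p₁, q₁, p₂, q₂) = (√(2(p₁+1)/π) · e^{iπ(q₁+1)}, √(2(p₂+1)/π) · e^{iπ(q₂+1)}) defines a symplectic embedding of the interior of the lagrangian bidisk P_L into the polydisk P(4,4); that is, Φ is injective on int(P_L), pulls back the standard symplectic form Σ dx_i ∧ dy_i on ℂ² to Σ dp_i ∧ dq_i, and its image satisfies π|z₁|² < 4 and π|z₂|² < 4. -/

import Mathlib

open Real

/-- The planar component map of the embedding of the lagrangian bidisk into P(4,4). -/
noncomputable def phiMap (z : ℝ × ℝ) : ℝ × ℝ :=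
  (Real.sqrt (2*(z.1+1)/π) * Real.cos (π*(z.2+1)),
   Real.sqrt (2*(z.1+1)/π) * Real.sin (π*(z.2+1)))

/-- The full map Φ(p₁,q₁,p₂,q₂) = (φ(p₁,q₁), φ(p₂,q₂)); here w = ((p₁,q₁),(p₂,q₂)). -/
noncomputable def PhiMap (w : (ℝ × ℝ) × (ℝ × ℝ)) : (ℝ × ℝ) × (ℝ × ℝ) :=
  (phiMap w.1, phiMap w.2)

/-- The interior of the lagrangian bidisk, with coordinates ((p₁,q₁),(p₂,q₂)). -/
def intPL : Set ((ℝ × ℝ) × (ℝ × ℝ)) :=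
  {w | w.1.1^2 + w.2.1^2 < 1 ∧ w.1.2^2 + w.2.2^2 < 1}

/-!
In polar coordinates the map φ(p, q) = (r cos θ, r sin θ) has `r²/2 = (p + 1)/π` and
`θ = π(q + 1)`, so `dx ∧ dy = d(r²/2) ∧ dθ = dp ∧ dq`. It is injective because `θ` ranges over an
interval of length less than `2π` when `|q| < 1`. As `|p| < 1`, the image of
each factor lies in the open disk of area `4`.
-/

lemma ContinuousLinearMap.det_eq_fst_snd {𝕜 : Type*} [NontriviallyNormedField 𝕜]
    (L : 𝕜 × 𝕜 →L[𝕜] 𝕜 × 𝕜) :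
    L.det = (L (1, 0)).1 * (L (0, 1)).2 - (L (0, 1)).1 * (L (1, 0)).2 := by
  rw [ContinuousLinearMap.det, ← LinearMap.det_toMatrix (Module.Basis.finTwoProd 𝕜),
    Matrix.det_fin_two]
  simp [LinearMap.toMatrix_apply, Module.Basis.finTwoProd]

lemma det_fderiv_polar {f g : ℝ → ℝ} {f' g' : ℝ} {z : ℝ × ℝ}
    (hf : HasDerivAt f f' z.1) (hg : HasDerivAt g g' z.2) :
    (fderiv ℝ (fun w : ℝ × ℝ => (f w.1 * cos (g w.2), f w.1 * sin (g w.2))) z).det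
      = f z.1 * f' * g' := by
  have hsnd := hasFDerivAt_snd (𝕜 := ℝ) (p := z)
  have hF := hf.comp_hasFDerivAt z (hasFDerivAt_fst (𝕜 := ℝ) (p := z))
  have hC := ((hasDerivAt_cos _).comp z.2 hg).comp_hasFDerivAt z hsnd
  have hS := ((hasDerivAt_sin _).comp z.2 hg).comp_hasFDerivAt z hsnd
  have hΦ : HasFDerivAt (fun w : ℝ × ℝ => (f w.1 * cos (g w.2), f w.1 * sin (g w.2))) _ z :=
    (hF.mul hC).prodMk (hF.mul hS)
  rw [hΦ.fderiv, ContinuousLinearMap.det_eq_fst_snd]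
  simp only [ContinuousLinearMap.prod_apply, add_apply,
    smul_apply, ContinuousLinearMap.coe_fst', ContinuousLinearMap.coe_snd',
    smul_eq_mul, Function.comp_apply]
  linear_combination f z.1 * f' * g' * sin_sq_add_cos_sq (g z.2)

lemma eq_of_mul_cos_eq_of_mul_sin_eq {r r' a b : ℝ} (hr : 0 < r) (hr' : 0 < r')
    (hab : |a - b| < 2 * π) (hcos : r * cos a = r' * cos b) (hsin : r * sin a = r' * sin b) :
    r = r' ∧ a = b := by
  have hsq : r ^ 2 = r' ^ 2 := by
    linear_combination (r * cos a + r' * cos b) * hcos + (r * sin a + r' * sin b) * hsin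
      - r ^ 2 * sin_sq_add_cos_sq a + r' ^ 2 * sin_sq_add_cos_sq b
  obtain rfl : r = r' := (pow_left_inj₀ hr.le hr'.le two_ne_zero).1 hsq
  have hc : cos a = cos b := mul_left_cancel₀ hr.ne' hcos
  have hs : sin a = sin b := mul_left_cancel₀ hr.ne' hsin
  have hcos_sub : cos (a - b) = 1 := by
    rw [cos_sub, hc, hs]
    linear_combination sin_sq_add_cos_sq b
  obtain ⟨hlo, hhi⟩ := abs_lt.1 hab
  exact ⟨rfl, sub_eq_zero.1 ((cos_eq_one_iff_of_lt_of_lt hlo hhi).1 hcos_sub)⟩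

lemma pi_mul_phiMap_norm_sq {z : ℝ × ℝ} (hz : -1 ≤ z.1) :
    π * ((phiMap z).1 ^ 2 + (phiMap z).2 ^ 2) = 2 * (z.1 + 1) := by
  have hsq : sqrt (2 * (z.1 + 1) / π) ^ 2 = 2 * (z.1 + 1) / π :=
    sq_sqrt (div_nonneg (by linarith) pi_pos.le)
  simp only [phiMap]
  rw [mul_pow, mul_pow, ← mul_add, cos_sq_add_sin_sq, mul_one, hsq]
  field_simp

lemma phiMap_injOn : Set.InjOn phiMap {z | -1 < z.1 ∧ |z.2| < 1} := by
  rintro ⟨p, q⟩ ⟨hp, hq⟩ ⟨p', q'⟩ ⟨hp', hq'⟩ h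
  have hpos : ∀ {s : ℝ}, -1 < s → 0 < 2 * (s + 1) / π := fun {s} hs =>
    div_pos (by linarith) pi_pos
  have hangle : |π * (q + 1) - π * (q' + 1)| < 2 * π := by
    have hdiff : |q - q'| < 2 := (abs_sub _ _).trans_lt (by linarith)
    rw [show π * (q + 1) - π * (q' + 1) = π * (q - q') by ring, abs_mul, abs_of_pos pi_pos]
    nlinarith [pi_pos]
  obtain ⟨hr, hθ⟩ := eq_of_mul_cos_eq_of_mul_sin_eq (sqrt_pos.2 (hpos hp)) (sqrt_pos.2 (hpos hp'))
    hangle (congrArg Prod.fst h) (congrArg Prod.snd h)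
  rw [sqrt_inj (hpos hp).le (hpos hp').le] at hr
  have hqq' : q = q' := by
    have := mul_left_cancel₀ pi_ne_zero hθ
    linarith
  have hpp' : p = p' := by
    field_simp at hr
    linarith
  rw [hpp', hqq']

lemma det_fderiv_phiMap {z : ℝ × ℝ} (hz : -1 < z.1) : (fderiv ℝ phiMap z).det = 1 := by
  have hx : 0 < 2 * (z.1 + 1) / π := div_pos (by linarith) pi_pos
  have hf : HasDerivAt (fun p : ℝ => sqrt (2 * (p + 1) / π))
      (1 / (2 * sqrt (2 * (z.1 + 1) / π)) * (2 * 1 / π)) z.1 :=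
    (hasDerivAt_sqrt hx.ne').comp z.1
      ((((hasDerivAt_id z.1).add_const 1).const_mul 2).div_const π)
  have hg : HasDerivAt (fun q : ℝ => π * (q + 1)) (π * 1) z.2 :=
    ((hasDerivAt_id z.2).add_const 1).const_mul π
  exact (det_fderiv_polar hf hg).trans (by field_simp)

lemma abs_lt_one_of_sq_add_sq_lt_one {a b : ℝ} (h : a ^ 2 + b ^ 2 < 1) : |a| < 1 :=
  (sq_lt_one_iff_abs_lt_one a).1 (by nlinarith [sq_nonneg b])

lemma intPL_subset_prod :
    intPL ⊆ {z : ℝ × ℝ | |z.1| < 1 ∧ |z.2| < 1} ×ˢ {z : ℝ × ℝ | |z.1| < 1 ∧ |z.2| < 1} :=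
  fun _ hw =>
    ⟨⟨abs_lt_one_of_sq_add_sq_lt_one hw.1, abs_lt_one_of_sq_add_sq_lt_one hw.2⟩,
      ⟨abs_lt_one_of_sq_add_sq_lt_one ((add_comm _ _).trans_lt hw.1),
        abs_lt_one_of_sq_add_sq_lt_one ((add_comm _ _).trans_lt hw.2)⟩⟩

theorem stmt7 :
    Set.InjOn PhiMap intPL ∧
    (∀ z : ℝ × ℝ, -1 < z.1 → z.1 < 1 → (fderiv ℝ phiMap z).det = 1) ∧
    (∀ w ∈ intPL,
      π * ((PhiMap w).1.1^2 + (PhiMap w).1.2^2) < 4 ∧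
      π * ((PhiMap w).2.1^2 + (PhiMap w).2.2^2) < 4) := by
  have injOn_square : Set.InjOn phiMap {z : ℝ × ℝ | |z.1| < 1 ∧ |z.2| < 1} :=
    phiMap_injOn.mono fun _ hz => And.intro (abs_lt.1 hz.1).1 hz.2
  have image_bound : ∀ {z : ℝ × ℝ}, |z.1| < 1 → π * ((phiMap z).1 ^ 2 + (phiMap z).2 ^ 2) < 4 :=
    fun hz => by
      rw [pi_mul_phiMap_norm_sq (abs_lt.1 hz).1.le]
      linarith [(abs_lt.1 hz).2]
  refine ⟨(injOn_square.prodMap injOn_square).mono intPL_subset_prod,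
    fun z hz _ => det_fderiv_phiMap hz, fun w hw => ?_⟩
  obtain ⟨h₁, h₂⟩ := intPL_subset_prod hw
  exact ⟨image_bound h₁.1, image_bound h₂.1⟩
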